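/- arXiv:2404.10712 — 6 statements merged into one kernel-verified Lean document; each statement's English description precedes it below -/
import Mathlib

section
/- Let A, B, C be sets of integers, let t be an integer, and let S = {8a+1 : a ∈ A} ∪ {8b+2 : b ∈ B} ∪ {8c−3 : c ∈ C}. Then for all x, y, z ∈ S, we have x + y + z = 8t if and only if there exist a ∈ A, b ∈ B, c ∈ C with a + b + c = t such that (x, y, z) is a permutation of (8a+1, 8b+2, 8c−3). -/
/-- Let `A, B, C` be sets of integers, let `t` be an integer, and let
`S = {8a+1 : a ∈ A} ∪ {8b+2 : b ∈ B} ∪ {8c−3 : c ∈ C}`. Then for all `x, y, z ∈ S`,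
we have `x + y + z = 8t` if and only if there exist `a ∈ A`, `b ∈ B`, `c ∈ C` with
`a + b + c = t` such that `(x, y, z)` is a permutation of `(8a+1, 8b+2, 8c−3)`. -/
theorem threePartition_from_numerical3DM_triples (A B C : Set ℤ) (t : ℤ) (S : Set ℤ)
    (hS : S = {x | ∃ a ∈ A, x = 8 * a + 1} ∪ {x | ∃ b ∈ B, x = 8 * b + 2} ∪
      {x | ∃ c ∈ C, x = 8 * c - 3}) :
    ∀ x ∈ S, ∀ y ∈ S, ∀ z ∈ S,
      (x + y + z = 8 * t ↔
        ∃ a ∈ A, ∃ b ∈ B, ∃ c ∈ C, a + b + c = t ∧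
          ((x = 8 * a + 1 ∧ y = 8 * b + 2 ∧ z = 8 * c - 3) ∨
           (x = 8 * a + 1 ∧ y = 8 * c - 3 ∧ z = 8 * b + 2) ∨
           (x = 8 * b + 2 ∧ y = 8 * a + 1 ∧ z = 8 * c - 3) ∨
           (x = 8 * b + 2 ∧ y = 8 * c - 3 ∧ z = 8 * a + 1) ∨
           (x = 8 * c - 3 ∧ y = 8 * a + 1 ∧ z = 8 * b + 2) ∨
           (x = 8 * c - 3 ∧ y = 8 * b + 2 ∧ z = 8 * a + 1))) := by
  subst hS
  intro x hx y hy z hz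
  simp only [Set.mem_union, Set.mem_setOf_eq] at hx hy hz
  constructor
  · intro h
    obtain (⟨p, hp, rfl⟩ | ⟨p, hp, rfl⟩) | ⟨p, hp, rfl⟩ := hx <;>
    obtain (⟨q, hq, rfl⟩ | ⟨q, hq, rfl⟩) | ⟨q, hq, rfl⟩ := hy <;>
    obtain (⟨r, hr, rfl⟩ | ⟨r, hr, rfl⟩) | ⟨r, hr, rfl⟩ := hz <;>
    first
    | exact ⟨p, hp, q, hq, r, hr, by omega, by omega⟩
    | exact ⟨p, hp, r, hr, q, hq, by omega, by omega⟩
    | exact ⟨q, hq, p, hp, r, hr, by omega, by omega⟩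
    | exact ⟨q, hq, r, hr, p, hp, by omega, by omega⟩
    | exact ⟨r, hr, p, hp, q, hq, by omega, by omega⟩
    | exact ⟨r, hr, q, hq, p, hp, by omega, by omega⟩
    | omega
  · rintro ⟨a, ha, b, hb, c, hc, hsum, h⟩
    rcases h with h | h | h | h | h | h <;> omega
end

section
/- Let A, B, C be pairwise disjoint finite sets of integers, each of cardinality n, and let t be an integer. Let A' = {8a+1 : a ∈ A}, B' = {8b+2 : b ∈ B}, C' = {8c−3 : c ∈ C}. Then the map sending a block D ⊆ A ∪ B ∪ C to its image {8a+1, 8b+2, 8c−3} (where D = {a, b, c} with a ∈ A, b ∈ B, c ∈ C) induces a bijection between: (i) the set of partitions of A ∪ B ∪ C into n blocks, each containing exactly one element of A, one element of B, and one element of C, with each block summing to t; and (ii) the set of partitions of A' ∪ B' ∪ C' into n three-element blocks, each summing to 8t. -/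
/-- The conversion map of the reduction from Numerical 3DM with Distinct Integers
to 3-Partition with Distinct Integers: elements of `A` are sent to `8a+1`,
elements of `B` to `8b+2`, and all remaining integers (in particular the elements
of `C`) to `8c−3`. -/
def numConv (A B : Finset ℤ) (x : ℤ) : ℤ :=
  if x ∈ A then 8 * x + 1 else if x ∈ B then 8 * x + 2 else 8 * x - 3
def gInv (y : ℤ) : ℤ :=
  if y % 8 = 1 then (y - 1) / 8 else if y % 8 = 2 then (y - 2) / 8 else (y + 3) / 8

lemma gInv_a (a : ℤ) : gInv (8 * a + 1) = a := by unfold gInv; split_ifs <;> omega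
lemma gInv_b (b : ℤ) : gInv (8 * b + 2) = b := by unfold gInv; split_ifs <;> omega
lemma gInv_c (c : ℤ) : gInv (8 * c - 3) = c := by unfold gInv; split_ifs <;> omega

lemma gInv_conv (A B : Finset ℤ) (x : ℤ) : gInv (numConv A B x) = x := by
  unfold numConv
  split_ifs
  · exact gInv_a x
  · exact gInv_b x
  · exact gInv_c x

lemma numConv_inj (A B : Finset ℤ) : Function.Injective (numConv A B) :=
  Function.LeftInverse.injective (gInv_conv A B)

lemma sup_image (P : Finset (Finset ℤ)) (f : ℤ → ℤ) :
    (P.image fun D => D.image f).sup id = (P.sup id).image f := by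
  ext x
  simp only [Finset.mem_sup, Finset.mem_image, id]
  constructor
  · rintro ⟨D', ⟨D, hD, rfl⟩, hx⟩
    rcases Finset.mem_image.1 hx with ⟨y, hy, rfl⟩
    exact ⟨y, ⟨D, hD, hy⟩, rfl⟩
  · rintro ⟨y, ⟨D, hD, hy⟩, rfl⟩
    exact ⟨D.image f, ⟨D, hD, rfl⟩, Finset.mem_image_of_mem f hy⟩

lemma sum_triple {a b c : ℤ} (hab : a ≠ b) (hac : a ≠ c) (hbc : b ≠ c) :
    ∑ x ∈ ({a, b, c} : Finset ℤ), x = a + b + c := by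
  rw [Finset.sum_insert (by simp [hab, hac]), Finset.sum_insert (by simp [hbc]),
    Finset.sum_singleton]
  ring

lemma card_triple {a b c : ℤ} (hab : a ≠ b) (hac : a ≠ c) (hbc : b ≠ c) :
    ({a, b, c} : Finset ℤ).card = 3 := by
  rw [Finset.card_insert_of_notMem (by simp [hab, hac]),
    Finset.card_insert_of_notMem (by simp [hbc]), Finset.card_singleton]

lemma block_struct (A B C D : Finset ℤ) (hAB : Disjoint A B) (hAC : Disjoint A C)
    (hBC : Disjoint B C) (hD : D ⊆ A ∪ B ∪ C)
    (h1 : (D ∩ A).card = 1) (h2 : (D ∩ B).card = 1) (h3 : (D ∩ C).card = 1) :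
    ∃ a b c, a ∈ A ∧ b ∈ B ∧ c ∈ C ∧ a ≠ b ∧ a ≠ c ∧ b ≠ c ∧ D = {a, b, c} := by
  obtain ⟨a, ha⟩ := Finset.card_eq_one.1 h1
  obtain ⟨b, hb⟩ := Finset.card_eq_one.1 h2
  obtain ⟨c, hc⟩ := Finset.card_eq_one.1 h3
  have haD : a ∈ D ∧ a ∈ A := Finset.mem_inter.1 (ha ▸ Finset.mem_singleton_self a)
  have hbD : b ∈ D ∧ b ∈ B := Finset.mem_inter.1 (hb ▸ Finset.mem_singleton_self b)
  have hcD : c ∈ D ∧ c ∈ C := Finset.mem_inter.1 (hc ▸ Finset.mem_singleton_self c)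
  have hab : a ≠ b := fun h => Finset.disjoint_left.1 hAB haD.2 (h ▸ hbD.2)
  have hac : a ≠ c := fun h => Finset.disjoint_left.1 hAC haD.2 (h ▸ hcD.2)
  have hbc : b ≠ c := fun h => Finset.disjoint_left.1 hBC hbD.2 (h ▸ hcD.2)
  refine ⟨a, b, c, haD.2, hbD.2, hcD.2, hab, hac, hbc, ?_⟩
  ext x
  simp only [Finset.mem_insert, Finset.mem_singleton]
  constructor
  · intro hx
    rcases Finset.mem_union.1 (hD hx) with h | h
    · rcases Finset.mem_union.1 h with h | h
      · have : x ∈ D ∩ A := Finset.mem_inter.2 ⟨hx, h⟩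
        rw [ha, Finset.mem_singleton] at this
        exact Or.inl this
      · have : x ∈ D ∩ B := Finset.mem_inter.2 ⟨hx, h⟩
        rw [hb, Finset.mem_singleton] at this
        exact Or.inr (Or.inl this)
    · have : x ∈ D ∩ C := Finset.mem_inter.2 ⟨hx, h⟩
      rw [hc, Finset.mem_singleton] at this
      exact Or.inr (Or.inr this)
  · rintro (rfl | rfl | rfl)
    exacts [haD.1, hbD.1, hcD.1]

lemma block_struct' (A B C : Finset ℤ) (t : ℤ) (E : Finset ℤ)
    (hE : E ⊆ (A.image fun a => 8 * a + 1) ∪ (B.image fun b => 8 * b + 2) ∪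
      (C.image fun c => 8 * c - 3))
    (hcard : E.card = 3) (hsum : ∑ x ∈ E, x = 8 * t) :
    ∃ a b c, a ∈ A ∧ b ∈ B ∧ c ∈ C ∧ E = {8 * a + 1, 8 * b + 2, 8 * c - 3} ∧
      a + b + c = t := by
  set A' := A.image fun a => 8 * a + 1 with hA'
  set B' := B.image fun b => 8 * b + 2 with hB'
  set C' := C.image fun c => 8 * c - 3 with hC'
  have hmA : ∀ y ∈ A', y % 8 = 1 := by
    intro y hy; obtain ⟨a, _, rfl⟩ := Finset.mem_image.1 hy; omega
  have hmB : ∀ y ∈ B', y % 8 = 2 := by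
    intro y hy; obtain ⟨b, _, rfl⟩ := Finset.mem_image.1 hy; omega
  have hmC : ∀ y ∈ C', y % 8 = 5 := by
    intro y hy; obtain ⟨c, _, rfl⟩ := Finset.mem_image.1 hy; omega
  set EA := E ∩ A' with hEA
  set EB := E ∩ B' with hEB
  set EC := E ∩ C' with hEC
  have hdAB : Disjoint EA EB := by
    rw [Finset.disjoint_left]; intro y hy1 hy2
    have := hmA y (Finset.mem_inter.1 hy1).2
    have := hmB y (Finset.mem_inter.1 hy2).2
    omega
  have hdAC : Disjoint EA EC := by
    rw [Finset.disjoint_left]; intro y hy1 hy2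
    have := hmA y (Finset.mem_inter.1 hy1).2
    have := hmC y (Finset.mem_inter.1 hy2).2
    omega
  have hdBC : Disjoint EB EC := by
    rw [Finset.disjoint_left]; intro y hy1 hy2
    have := hmB y (Finset.mem_inter.1 hy1).2
    have := hmC y (Finset.mem_inter.1 hy2).2
    omega
  have hdU : Disjoint (EA ∪ EB) EC := Finset.disjoint_union_left.2 ⟨hdAC, hdBC⟩
  have hEeq : E = EA ∪ EB ∪ EC := by
    ext x
    simp only [Finset.mem_union, hEA, hEB, hEC, Finset.mem_inter]
    constructor
    · intro hx
      rcases Finset.mem_union.1 (hE hx) with h | h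
      · rcases Finset.mem_union.1 h with h | h
        · exact Or.inl (Or.inl ⟨hx, h⟩)
        · exact Or.inl (Or.inr ⟨hx, h⟩)
      · exact Or.inr ⟨hx, h⟩
    · rintro ((⟨h, _⟩ | ⟨h, _⟩) | ⟨h, _⟩) <;> exact h
  have hcards : EA.card + EB.card + EC.card = 3 := by
    rw [hEeq, Finset.card_union_of_disjoint hdU, Finset.card_union_of_disjoint hdAB] at hcard
    omega
  have hsums : ∑ y ∈ EA, y + ∑ y ∈ EB, y + ∑ y ∈ EC, y = 8 * t := by
    rw [hEeq, Finset.sum_union hdU, Finset.sum_union hdAB] at hsum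
    linarith
  have hdvA : (8 : ℤ) ∣ (∑ y ∈ EA, y - EA.card) := by
    have h : ∑ y ∈ EA, y - (EA.card : ℤ) = ∑ y ∈ EA, (y - 1) := by
      rw [Finset.sum_sub_distrib]; simp
    rw [h]
    exact Finset.dvd_sum fun y hy => by
      have := hmA y (Finset.mem_inter.1 hy).2; omega
  have hdvB : (8 : ℤ) ∣ (∑ y ∈ EB, y - 2 * EB.card) := by
    have h : ∑ y ∈ EB, y - 2 * (EB.card : ℤ) = ∑ y ∈ EB, (y - 2) := by
      rw [Finset.sum_sub_distrib]; simp; ring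
    rw [h]
    exact Finset.dvd_sum fun y hy => by
      have := hmB y (Finset.mem_inter.1 hy).2; omega
  have hdvC : (8 : ℤ) ∣ (∑ y ∈ EC, y + 3 * EC.card) := by
    have h : ∑ y ∈ EC, y + 3 * (EC.card : ℤ) = ∑ y ∈ EC, (y + 3) := by
      rw [Finset.sum_add_distrib]; simp; ring
    rw [h]
    exact Finset.dvd_sum fun y hy => by
      have := hmC y (Finset.mem_inter.1 hy).2; omega
  have h111 : EA.card = 1 ∧ EB.card = 1 ∧ EC.card = 1 := by omega
  obtain ⟨ya, hya⟩ := Finset.card_eq_one.1 h111.1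
  obtain ⟨yb, hyb⟩ := Finset.card_eq_one.1 h111.2.1
  obtain ⟨yc, hyc⟩ := Finset.card_eq_one.1 h111.2.2
  have hyaA : ya ∈ A' := (Finset.mem_inter.1 (hya ▸ Finset.mem_singleton_self ya)).2
  have hybB : yb ∈ B' := (Finset.mem_inter.1 (hyb ▸ Finset.mem_singleton_self yb)).2
  have hycC : yc ∈ C' := (Finset.mem_inter.1 (hyc ▸ Finset.mem_singleton_self yc)).2
  obtain ⟨a, haA, hfa⟩ := Finset.mem_image.1 hyaA
  obtain ⟨b, hbB, hfb⟩ := Finset.mem_image.1 hybB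
  obtain ⟨c, hcC, hfc⟩ := Finset.mem_image.1 hycC
  have hEfinal : E = {ya, yb, yc} := by
    rw [hEeq, hya, hyb, hyc]
    ext x
    simp [or_assoc]
  have hsum3 : ya + yb + yc = 8 * t := by
    rw [hya, hyb, hyc, Finset.sum_singleton, Finset.sum_singleton,
      Finset.sum_singleton] at hsums
    exact hsums
  refine ⟨a, b, c, haA, hbB, hcC, ?_, by omega⟩
  rw [hEfinal, hfa, hfb, hfc]

/-- Let `A, B, C` be pairwise disjoint finite sets of integers, each of
cardinality `n`, and let `t` be an integer. Let `A' = {8a+1 : a ∈ A}`,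
`B' = {8b+2 : b ∈ B}`, `C' = {8c−3 : c ∈ C}`. Then the map sending a block
`D ⊆ A ∪ B ∪ C` to its image `{8a+1, 8b+2, 8c−3}` (where `D = {a, b, c}` with
`a ∈ A`, `b ∈ B`, `c ∈ C`) induces a bijection between: (i) the set of partitions of
`A ∪ B ∪ C` into `n` blocks, each containing exactly one element of `A`, one element
of `B`, and one element of `C`, with each block summing to `t`; and (ii) the set of
partitions of `A' ∪ B' ∪ C'` into `n` three-element blocks, each summing to `8t`. -/
theorem numerical3DM_to_threePartition_parsimonious (n : ℕ) (t : ℤ) (A B C : Finset ℤ)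
    (hAB : Disjoint A B) (hAC : Disjoint A C) (hBC : Disjoint B C)
    (hA : A.card = n) (hB : B.card = n) (hC : C.card = n) :
    Set.BijOn (fun P : Finset (Finset ℤ) => P.image fun D => D.image (numConv A B))
      {P : Finset (Finset ℤ) |
        P.card = n ∧
        (∀ D ∈ P, ∀ E ∈ P, D ≠ E → Disjoint D E) ∧
        P.sup id = A ∪ B ∪ C ∧
        ∀ D ∈ P, (D ∩ A).card = 1 ∧ (D ∩ B).card = 1 ∧ (D ∩ C).card = 1 ∧
          (∑ x ∈ D, x) = t}
      {Q : Finset (Finset ℤ) |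
        Q.card = n ∧
        (∀ D ∈ Q, ∀ E ∈ Q, D ≠ E → Disjoint D E) ∧
        Q.sup id = (A.image fun a => 8 * a + 1) ∪ (B.image fun b => 8 * b + 2) ∪
          (C.image fun c => 8 * c - 3) ∧
        ∀ D ∈ Q, D.card = 3 ∧ (∑ x ∈ D, x) = 8 * t} := by
  have hinjf : Function.Injective (numConv A B) := numConv_inj A B
  have hfa : ∀ a ∈ A, numConv A B a = 8 * a + 1 := fun a ha => by simp [numConv, ha]
  have hfb : ∀ b ∈ B, numConv A B b = 8 * b + 2 := fun b hb => by
    simp [numConv, Finset.disjoint_right.1 hAB hb, hb]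
  have hfc : ∀ c ∈ C, numConv A B c = 8 * c - 3 := fun c hc => by
    simp [numConv, Finset.disjoint_right.1 hAC hc, Finset.disjoint_right.1 hBC hc]
  refine ⟨?_, ?_, ?_⟩
  · -- MapsTo
    rintro P ⟨hPc, hPd, hPs, hPb⟩
    refine ⟨?_, ?_, ?_, ?_⟩
    · rw [Finset.card_image_of_injective _ (Finset.image_injective hinjf), hPc]
    · rintro D' hD' E' hE' hne
      obtain ⟨D, hD, rfl⟩ := Finset.mem_image.1 hD'
      obtain ⟨E, hE, rfl⟩ := Finset.mem_image.1 hE'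
      have hDE : D ≠ E := fun h => hne (by rw [h])
      exact (Finset.disjoint_image hinjf).2 (hPd D hD E hE hDE)
    · rw [sup_image, hPs, Finset.image_union, Finset.image_union,
        Finset.image_congr (g := fun a => 8 * a + 1) fun a ha => hfa a ha,
        Finset.image_congr (g := fun b => 8 * b + 2) fun b hb => hfb b hb,
        Finset.image_congr (g := fun c => 8 * c - 3) fun c hc => hfc c hc]
    · rintro D' hD'
      obtain ⟨D, hD, rfl⟩ := Finset.mem_image.1 hD'
      obtain ⟨h1, h2, h3, hsum⟩ := hPb D hD
      have hDsub : D ⊆ A ∪ B ∪ C := hPs ▸ Finset.le_sup (f := id) hD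
      obtain ⟨a, b, c, ha, hb, hc, hab, hac, hbc, rfl⟩ :=
        block_struct A B C D hAB hAC hBC hDsub h1 h2 h3
      have himg : ({a, b, c} : Finset ℤ).image (numConv A B) =
          {8 * a + 1, 8 * b + 2, 8 * c - 3} := by
        rw [Finset.image_insert, Finset.image_insert, Finset.image_singleton,
          hfa a ha, hfb b hb, hfc c hc]
      rw [himg] at *
      have hsum' : a + b + c = t := by rwa [sum_triple hab hac hbc] at hsum
      refine ⟨card_triple (by omega) (by omega) (by omega), ?_⟩
      rw [sum_triple (by omega) (by omega) (by omega)]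
      omega
  · -- InjOn
    exact Function.Injective.injOn (Finset.image_injective (Finset.image_injective hinjf))
  · -- SurjOn
    rintro Q ⟨hQc, hQd, hQs, hQb⟩
    have hstruct : ∀ E ∈ Q, ∃ a b c, a ∈ A ∧ b ∈ B ∧ c ∈ C ∧
        E = {8 * a + 1, 8 * b + 2, 8 * c - 3} ∧ a + b + c = t := fun E hE =>
      block_struct' A B C t E (hQs ▸ Finset.le_sup (f := id) hE) (hQb E hE).1 (hQb E hE).2
    have hGE : ∀ E ∈ Q, ((E.image gInv).image (numConv A B)) = E := by
      intro E hE
      obtain ⟨a, b, c, ha, hb, hc, hEeq, -⟩ := hstruct E hE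
      subst hEeq
      simp only [Finset.image_insert, Finset.image_singleton, gInv_a, gInv_b, gInv_c,
        hfa a ha, hfb b hb, hfc c hc]
    have hfgy : ∀ E ∈ Q, ∀ y ∈ E, numConv A B (gInv y) = y := by
      intro E hE y hy
      obtain ⟨a, b, c, ha, hb, hc, hEeq, -⟩ := hstruct E hE
      subst hEeq
      rcases Finset.mem_insert.1 hy with rfl | hy
      · rw [gInv_a, hfa a ha]
      rcases Finset.mem_insert.1 hy with rfl | hy
      · rw [gInv_b, hfb b hb]
      rw [Finset.mem_singleton.1 hy, gInv_c, hfc c hc]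
    refine ⟨Q.image fun E => E.image gInv, ⟨?_, ?_, ?_, ?_⟩, ?_⟩
    · -- card
      have hinjG : Set.InjOn (fun E : Finset ℤ => E.image gInv) ↑Q := by
        intro E1 h1 E2 h2 h
        have h' := congrArg (fun S : Finset ℤ => S.image (numConv A B)) h
        simp only at h'
        rwa [hGE E1 (Finset.mem_coe.1 h1), hGE E2 (Finset.mem_coe.1 h2)] at h'
      rw [Finset.card_image_of_injOn hinjG, hQc]
    · -- pairwise disjoint
      rintro D1 hD1 D2 hD2 hne
      obtain ⟨E1, hE1, rfl⟩ := Finset.mem_image.1 hD1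
      obtain ⟨E2, hE2, rfl⟩ := Finset.mem_image.1 hD2
      have hE12 : E1 ≠ E2 := fun h => hne (by rw [h])
      have hd := hQd E1 hE1 E2 hE2 hE12
      rw [Finset.disjoint_left]
      rintro x hx1 hx2
      obtain ⟨y1, hy1, rfl⟩ := Finset.mem_image.1 hx1
      obtain ⟨y2, hy2, hgy2⟩ := Finset.mem_image.1 hx2
      have e1 := hfgy E1 hE1 y1 hy1
      have e2 := hfgy E2 hE2 y2 hy2
      rw [hgy2] at e2
      have hyy : y1 = y2 := e1.symm.trans e2
      exact Finset.disjoint_left.1 hd hy1 (by rw [hyy]; exact hy2)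
    · -- sup
      rw [sup_image, hQs, Finset.image_union, Finset.image_union]
      have hA' : (A.image fun a => 8 * a + 1).image gInv = A := by
        rw [Finset.image_image]
        exact Eq.trans (Finset.image_congr fun a _ => gInv_a a) Finset.image_id
      have hB' : (B.image fun b => 8 * b + 2).image gInv = B := by
        rw [Finset.image_image]
        exact Eq.trans (Finset.image_congr fun b _ => gInv_b b) Finset.image_id
      have hC' : (C.image fun c => 8 * c - 3).image gInv = C := by
        rw [Finset.image_image]
        exact Eq.trans (Finset.image_congr fun c _ => gInv_c c) Finset.image_id
      rw [hA', hB', hC']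
    · -- blocks
      rintro D hD
      obtain ⟨E, hE, rfl⟩ := Finset.mem_image.1 hD
      obtain ⟨a, b, c, ha, hb, hc, hEeq, hsum⟩ := hstruct E hE
      subst hEeq
      have himg : ({8 * a + 1, 8 * b + 2, 8 * c - 3} : Finset ℤ).image gInv = {a, b, c} := by
        rw [Finset.image_insert, Finset.image_insert, Finset.image_singleton,
          gInv_a, gInv_b, gInv_c]
      rw [himg]
      have haB : a ∉ B := Finset.disjoint_left.1 hAB ha
      have haC : a ∉ C := Finset.disjoint_left.1 hAC ha
      have hbA : b ∉ A := Finset.disjoint_right.1 hAB hb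
      have hbC : b ∉ C := Finset.disjoint_left.1 hBC hb
      have hcA : c ∉ A := Finset.disjoint_right.1 hAC hc
      have hcB : c ∉ B := Finset.disjoint_right.1 hBC hc
      have hab : a ≠ b := fun h => hbA (h ▸ ha)
      have hac : a ≠ c := fun h => hcA (h ▸ ha)
      have hbc : b ≠ c := fun h => hcB (h ▸ hb)
      refine ⟨?_, ?_, ?_, ?_⟩
      · rw [show ({a, b, c} : Finset ℤ) ∩ A = {a} from ?_]
        · exact Finset.card_singleton a
        · ext x
          simp only [Finset.mem_inter, Finset.mem_insert, Finset.mem_singleton]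
          constructor
          · rintro ⟨rfl | rfl | rfl, hx⟩
            · rfl
            · exact absurd hx hbA
            · exact absurd hx hcA
          · rintro rfl; exact ⟨Or.inl rfl, ha⟩
      · rw [show ({a, b, c} : Finset ℤ) ∩ B = {b} from ?_]
        · exact Finset.card_singleton b
        · ext x
          simp only [Finset.mem_inter, Finset.mem_insert, Finset.mem_singleton]
          constructor
          · rintro ⟨rfl | rfl | rfl, hx⟩
            · exact absurd hx haB
            · rfl
            · exact absurd hx hcB
          · rintro rfl; exact ⟨Or.inr (Or.inl rfl), hb⟩
      · rw [show ({a, b, c} : Finset ℤ) ∩ C = {c} from ?_]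
        · exact Finset.card_singleton c
        · ext x
          simp only [Finset.mem_inter, Finset.mem_insert, Finset.mem_singleton]
          constructor
          · rintro ⟨rfl | rfl | rfl, hx⟩
            · exact absurd hx haC
            · exact absurd hx hbC
            · rfl
          · rintro rfl; exact ⟨Or.inr (Or.inr rfl), hc⟩
      · rw [sum_triple hab hac hbc]; exact hsum
    · -- maps back to Q
      show (Q.image fun E => E.image gInv).image (fun D => D.image (numConv A B)) = Q
      rw [Finset.image_image]
      refine Eq.trans (Finset.image_congr fun E hEm => ?_) Finset.image_id
      exact hGE E (Finset.mem_coe.1 hEm)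
end

section
/- Let q ≥ 2 be an integer and let i, i', j, j', k, k' be integers with 1 ≤ i, i', j, j', k, k' and 2i ≤ q, 2i' ≤ q, 2j ≤ q, 2j' ≤ q, 2k ≤ q, 2k' ≤ q. Then (2q⁶ + iq − k) + (7q⁶ + jq² + k') + (10q⁶ − j'q² − i'q) = 19q⁶ if and only if i = i', j = j', and k = k'. -/
/-! The sum equals `19q⁶` exactly when `j q² + (i q - k) = j' q² + (i' q - k')`. Since all the
indices lie in `[1, q/2]`, both sides are written in base `q` with balanced digits of absolute
value below `q/2`, so the digits can be compared one place at a time. -/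

namespace Int

theorem eq_and_eq_of_mul_add_eq_mul_add {a a' r r' b : ℤ} (h : a * b + r = a' * b + r')
    (hr : |r - r'| < b) : a = a' ∧ r = r' := by
  have hrr' : r - r' = 0 :=
    eq_zero_of_abs_lt_dvd ⟨a' - a, by linear_combination h⟩ hr
  have hb : b ≠ 0 := (lt_of_le_of_lt (abs_nonneg _) hr).ne'
  exact ⟨mul_right_cancel₀ hb (by linear_combination h - hrr'), sub_eq_zero.mp hrr'⟩

theorem two_mul_abs_sub_lt {x y q : ℤ} (hx : 1 ≤ x) (hy : 1 ≤ y) (hxq : 2 * x ≤ q)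
    (hyq : 2 * y ≤ q) : 2 * |x - y| < q := by
  rcases abs_cases (x - y) with ⟨h, _⟩ | ⟨h, _⟩ <;> omega

theorem abs_mul_add_lt_sq {a r q : ℤ} (ha : 2 * |a| < q) (hr : 2 * |r| < q) :
    |a * q + r| < q ^ 2 := by
  have hq : 0 < q := by linarith [abs_nonneg r]
  calc |a * q + r| ≤ |a| * q + |r| := by
        simpa only [abs_mul, abs_of_pos hq] using abs_add_le (a * q) r
    _ < q ^ 2 := by nlinarith

end Int

theorem hulett_sum_iff_indices_match_general (q i i' j j' k k' : ℤ)
    (hi : 1 ≤ i) (hi' : 1 ≤ i')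
    (hk : 1 ≤ k) (hk' : 1 ≤ k')
    (hiq : 2 * i ≤ q) (hi'q : 2 * i' ≤ q)
    (hkq : 2 * k ≤ q) (hk'q : 2 * k' ≤ q) :
    (2 * q ^ 6 + i * q - k) + (7 * q ^ 6 + j * q ^ 2 + k') +
      (10 * q ^ 6 - j' * q ^ 2 - i' * q) = 19 * q ^ 6 ↔
    i = i' ∧ j = j' ∧ k = k' := by
  constructor
  · intro h
    have hik : |(i * q + -k) - (i' * q + -k')| < q ^ 2 := by
      rw [show i * q + -k - (i' * q + -k') = (i - i') * q + (k' - k) by ring]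
      exact Int.abs_mul_add_lt_sq (Int.two_mul_abs_sub_lt hi hi' hiq hi'q)
        (Int.two_mul_abs_sub_lt hk' hk hk'q hkq)
    have hsum : j * q ^ 2 + (i * q + -k) = j' * q ^ 2 + (i' * q + -k') := by
      linear_combination h
    obtain ⟨rfl, hr⟩ := Int.eq_and_eq_of_mul_add_eq_mul_add hsum hik
    have hkk' : |-k - -k'| < q := by
      have := Int.two_mul_abs_sub_lt hk hk' hkq hk'q
      rw [neg_sub_neg, abs_sub_comm]; linarith [abs_nonneg (k - k')]
    obtain ⟨rfl, hk_eq⟩ := Int.eq_and_eq_of_mul_add_eq_mul_add hr hkk'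
    exact ⟨rfl, rfl, neg_inj.mp hk_eq⟩
  · rintro ⟨rfl, rfl, rfl⟩
    ring

/-- Let `q ≥ 2` be an integer and let `i, i', j, j', k, k'` be integers
with `1 ≤ i, i', j, j', k, k'` and `2i ≤ q`, `2i' ≤ q`, `2j ≤ q`, `2j' ≤ q`,
`2k ≤ q`, `2k' ≤ q`. Then
`(2q⁶ + iq − k) + (7q⁶ + jq² + k') + (10q⁶ − j'q² − i'q) = 19q⁶`
if and only if `i = i'`, `j = j'`, and `k = k'`. -/
theorem hulett_sum_iff_indices_match (q i i' j j' k k' : ℤ) (hq : 2 ≤ q)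
    (hi : 1 ≤ i) (hi' : 1 ≤ i') (hj : 1 ≤ j) (hj' : 1 ≤ j')
    (hk : 1 ≤ k) (hk' : 1 ≤ k')
    (hiq : 2 * i ≤ q) (hi'q : 2 * i' ≤ q) (hjq : 2 * j ≤ q) (hj'q : 2 * j' ≤ q)
    (hkq : 2 * k ≤ q) (hk'q : 2 * k' ≤ q) :
    (2 * q ^ 6 + i * q - k) + (7 * q ^ 6 + j * q ^ 2 + k') +
      (10 * q ^ 6 - j' * q ^ 2 - i' * q) = 19 * q ^ 6 ↔
    i = i' ∧ j = j' ∧ k = k' :=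
  hulett_sum_iff_indices_match_general q i i' j j' k k' hi hi' hk hk' hiq hi'q hkq hk'q
end

section
/- Let q ≥ 2 be an integer and define S_A = {2q⁶ + iq − k : 1 ≤ i, 1 ≤ k, 2i ≤ q, 2k ≤ q}, S_B = {7q⁶ + jq² + k : 1 ≤ j, 1 ≤ k, 2j ≤ q, 2k ≤ q}, and S_C = {10q⁶ − jq² − iq : 1 ≤ i, 1 ≤ j, 2i ≤ q, 2j ≤ q}. If x, y, z ∈ S_A ∪ S_B ∪ S_C and x + y + z = 19q⁶, then exactly one of x, y, z belongs to S_A, exactly one belongs to S_B, and exactly one belongs to S_C. -/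
/-- `ExactlyOne P Q R` means exactly one of the three propositions holds. -/
def ExactlyOne (P Q R : Prop) : Prop :=
  (P ∧ ¬Q ∧ ¬R) ∨ (¬P ∧ Q ∧ ¬R) ∨ (¬P ∧ ¬Q ∧ R)

set_option maxHeartbeats 1000000 in
/-- Let `q ≥ 2` be an integer and define
`S_A = {2q⁶ + iq − k : 1 ≤ i, 1 ≤ k, 2i ≤ q, 2k ≤ q}`,
`S_B = {7q⁶ + jq² + k : 1 ≤ j, 1 ≤ k, 2j ≤ q, 2k ≤ q}`, and
`S_C = {10q⁶ − jq² − iq : 1 ≤ i, 1 ≤ j, 2i ≤ q, 2j ≤ q}`.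
If `x, y, z ∈ S_A ∪ S_B ∪ S_C` and `x + y + z = 19q⁶`, then exactly one of
`x, y, z` belongs to `S_A`, exactly one belongs to `S_B`, and exactly one belongs
to `S_C`. -/
theorem hulett_triple_one_from_each (q : ℤ) (hq : 2 ≤ q) (SA SB SC : Set ℤ)
    (hSA : SA = {m | ∃ i k : ℤ, 1 ≤ i ∧ 1 ≤ k ∧ 2 * i ≤ q ∧ 2 * k ≤ q ∧
      m = 2 * q ^ 6 + i * q - k})
    (hSB : SB = {m | ∃ j k : ℤ, 1 ≤ j ∧ 1 ≤ k ∧ 2 * j ≤ q ∧ 2 * k ≤ q ∧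
      m = 7 * q ^ 6 + j * q ^ 2 + k})
    (hSC : SC = {m | ∃ i j : ℤ, 1 ≤ i ∧ 1 ≤ j ∧ 2 * i ≤ q ∧ 2 * j ≤ q ∧
      m = 10 * q ^ 6 - j * q ^ 2 - i * q})
    (x y z : ℤ)
    (hx : x ∈ SA ∪ SB ∪ SC) (hy : y ∈ SA ∪ SB ∪ SC) (hz : z ∈ SA ∪ SB ∪ SC)
    (hsum : x + y + z = 19 * q ^ 6) :
    ExactlyOne (x ∈ SA) (y ∈ SA) (z ∈ SA) ∧
    ExactlyOne (x ∈ SB) (y ∈ SB) (z ∈ SB) ∧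
    ExactlyOne (x ∈ SC) (y ∈ SC) (z ∈ SC) := by
  have hq0 : (0:ℤ) < q := by linarith
  have hq3 : (0:ℤ) < q ^ 3 := by positivity
  have hq63 : 3 * q ^ 3 < q ^ 6 := by nlinarith [sq_nonneg q, sq_nonneg (q^2), sq_nonneg (q^3 - 4*q)]
  have hqq : (0:ℤ) ≤ q * q * (q - 1) :=
    mul_nonneg (mul_nonneg hq0.le hq0.le) (by linarith)
  have hq13 : q ≤ q ^ 3 := by nlinarith [mul_nonneg (by nlinarith : (0:ℤ) ≤ q * q - 1) hq0.le]
  have bA : ∀ m, m ∈ SA → 2 * q ^ 6 < m ∧ m ≤ 2 * q ^ 6 + q ^ 3 := by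
    intro m hm
    rw [hSA] at hm
    obtain ⟨i, k, hi, hk, hiq, hkq, rfl⟩ := hm
    constructor
    · nlinarith [mul_nonneg (by linarith : (0:ℤ) ≤ i - 1) hq0.le]
    · nlinarith [mul_nonneg (by linarith : (0:ℤ) ≤ q - 2 * i) hq0.le, hqq]
  have bB : ∀ m, m ∈ SB → 7 * q ^ 6 < m ∧ m ≤ 7 * q ^ 6 + q ^ 3 := by
    intro m hm
    rw [hSB] at hm
    obtain ⟨j, k, hj, hk, hjq, hkq, rfl⟩ := hm
    constructor
    · nlinarith [mul_pos (by linarith : (0:ℤ) < j) (mul_pos hq0 hq0)]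
    · nlinarith [mul_nonneg (mul_nonneg (by linarith : (0:ℤ) ≤ q - 2 * j) hq0.le) hq0.le, hq13]
  have bC : ∀ m, m ∈ SC → 10 * q ^ 6 - q ^ 3 ≤ m ∧ m < 10 * q ^ 6 := by
    intro m hm
    rw [hSC] at hm
    obtain ⟨i, j, hi, hj, hiq, hjq, rfl⟩ := hm
    constructor
    · nlinarith [mul_nonneg (mul_nonneg (by linarith : (0:ℤ) ≤ q - 2 * j) hq0.le) hq0.le,
        mul_nonneg (by linarith : (0:ℤ) ≤ q - 2 * i) hq0.le, hqq]
    · nlinarith [mul_pos (by linarith : (0:ℤ) < j) (mul_pos hq0 hq0),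
        mul_pos (by linarith : (0:ℤ) < i) hq0]
  have dAB : ∀ m, m ∈ SA → m ∈ SB → False := by
    intro m h1 h2
    have b1 := bA m h1; have b2 := bB m h2; linarith [b1.2, b2.1]
  have dAC : ∀ m, m ∈ SA → m ∈ SC → False := by
    intro m h1 h2
    have b1 := bA m h1; have b2 := bC m h2; linarith [b1.2, b2.1]
  have dBC : ∀ m, m ∈ SB → m ∈ SC → False := by
    intro m h1 h2
    have b1 := bB m h1; have b2 := bC m h2; linarith [b1.2, b2.1]
  have cat : ∀ m, m ∈ SA ∪ SB ∪ SC →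
      (m ∈ SA ∧ m ∉ SB ∧ m ∉ SC ∧ 2 * q ^ 6 < m ∧ m ≤ 2 * q ^ 6 + q ^ 3) ∨
      (m ∉ SA ∧ m ∈ SB ∧ m ∉ SC ∧ 7 * q ^ 6 < m ∧ m ≤ 7 * q ^ 6 + q ^ 3) ∨
      (m ∉ SA ∧ m ∉ SB ∧ m ∈ SC ∧ 10 * q ^ 6 - q ^ 3 ≤ m ∧ m < 10 * q ^ 6) := by
    intro m hm
    rcases hm with (h | h) | h
    · exact Or.inl ⟨h, fun h' => dAB m h h', fun h' => dAC m h h', (bA m h).1, (bA m h).2⟩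
    · exact Or.inr (Or.inl ⟨fun h' => dAB m h' h, h, fun h' => dBC m h h', (bB m h).1, (bB m h).2⟩)
    · exact Or.inr (Or.inr ⟨fun h' => dAC m h' h, fun h' => dBC m h' h, h, (bC m h).1, (bC m h).2⟩)
  have cx := cat x hx
  have cy := cat y hy
  have cz := cat z hz
  clear hx hy hz cat dAB dAC dBC bA bB bC hSA hSB hSC
  rcases cx with ⟨hxA, hxB, hxC, hx1, hx2⟩ | ⟨hxA, hxB, hxC, hx1, hx2⟩ | ⟨hxA, hxB, hxC, hx1, hx2⟩ <;>
  rcases cy with ⟨hyA, hyB, hyC, hy1, hy2⟩ | ⟨hyA, hyB, hyC, hy1, hy2⟩ | ⟨hyA, hyB, hyC, hy1, hy2⟩ <;>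
  rcases cz with ⟨hzA, hzB, hzC, hz1, hz2⟩ | ⟨hzA, hzB, hzC, hz1, hz2⟩ | ⟨hzA, hzB, hzC, hz1, hz2⟩ <;>
  first
    | (exfalso; linarith)
    | (unfold ExactlyOne; tauto)
end

section
/- Let p, r, s ≥ 1 be integers and let q = 2·max(p, r, s). Let G be a simple graph whose vertex set is the disjoint union U ⊔ V ⊔ W with U = {u_1, …, u_p}, V = {v_1, …, v_r}, W = {w_1, …, w_s}, and all of whose edges join vertices in two different parts. Label each edge {u_i, w_k} by 2q⁶ + iq − k, each edge {v_j, w_k} by 7q⁶ + jq² + k, and each edge {u_i, v_j} by 10q⁶ − jq² − iq. Then for any three distinct edges e₁, e₂, e₃ of G, the labels of e₁, e₂, e₃ sum to 19q⁶ if and only if {e₁, e₂, e₃} is the edge set of a triangle of G (i.e., there exist i, j, k with e₁ = {u_i, w_k}, e₂ = {v_j, w_k}, e₃ = {u_i, v_j}, up to permutation). -/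
/-- The edge-labeling of the reduction from Tripartite Edge-Disjoint Triangle
Partition to Numerical 3DM with Distinct Integers: on the tripartite vertex set
`U ⊔ V ⊔ W` (with `U = Fin p`, `V = Fin r`, `W = Fin s`, vertex `u_i` being index
`i - 1`, etc.), the edge `{u_i, w_k}` is labeled `2q⁶ + iq − k`, the edge
`{v_j, w_k}` is labeled `7q⁶ + jq² + k`, and the edge `{u_i, v_j}` is labeled
`10q⁶ − jq² − iq`.  The function is symmetric by construction (pairs of vertices
within one part are never edges and get the junk value `0`). -/
def edgeLabel (p r s : ℕ) (q : ℤ) :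
    Fin p ⊕ Fin r ⊕ Fin s → Fin p ⊕ Fin r ⊕ Fin s → ℤ
  | Sum.inl u, Sum.inr (Sum.inr w) => 2 * q ^ 6 + ((u : ℕ) + 1 : ℤ) * q - ((w : ℕ) + 1 : ℤ)
  | Sum.inr (Sum.inr w), Sum.inl u => 2 * q ^ 6 + ((u : ℕ) + 1 : ℤ) * q - ((w : ℕ) + 1 : ℤ)
  | Sum.inr (Sum.inl v), Sum.inr (Sum.inr w) =>
      7 * q ^ 6 + ((v : ℕ) + 1 : ℤ) * q ^ 2 + ((w : ℕ) + 1 : ℤ)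
  | Sum.inr (Sum.inr w), Sum.inr (Sum.inl v) =>
      7 * q ^ 6 + ((v : ℕ) + 1 : ℤ) * q ^ 2 + ((w : ℕ) + 1 : ℤ)
  | Sum.inl u, Sum.inr (Sum.inl v) =>
      10 * q ^ 6 - ((v : ℕ) + 1 : ℤ) * q ^ 2 - ((u : ℕ) + 1 : ℤ) * q
  | Sum.inr (Sum.inl v), Sum.inl u =>
      10 * q ^ 6 - ((v : ℕ) + 1 : ℤ) * q ^ 2 - ((u : ℕ) + 1 : ℤ) * q
  | _, _ => 0

lemma tri_dUW {q i k : ℤ} (hq : 2 ≤ q) (hi1 : 1 ≤ i) (hi2 : 2*i ≤ q) (hk1 : 1 ≤ k) (hk2 : 2*k ≤ q) :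
    -q^3 < i*q - k ∧ i*q - k < q^3 := by
  have hq0 : (0:ℤ) < q := by linarith
  constructor <;> nlinarith [mul_le_mul_of_nonneg_right hi2 hq0.le, pow_pos hq0 3, sq_nonneg q]

lemma tri_dVW {q j k : ℤ} (hq : 2 ≤ q) (hj1 : 1 ≤ j) (hj2 : 2*j ≤ q) (hk1 : 1 ≤ k) (hk2 : 2*k ≤ q) :
    -q^3 < j*q^2 + k ∧ j*q^2 + k < q^3 := by
  have hq0 : (0:ℤ) < q := by linarith
  constructor <;> nlinarith [mul_le_mul_of_nonneg_right hj2 (sq_nonneg q), pow_pos hq0 3, pow_pos hq0 2]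

lemma tri_dUV {q i j : ℤ} (hq : 2 ≤ q) (hi1 : 1 ≤ i) (hi2 : 2*i ≤ q) (hj1 : 1 ≤ j) (hj2 : 2*j ≤ q) :
    -q^3 < j*q^2 + i*q ∧ j*q^2 + i*q < q^3 := by
  have hq0 : (0:ℤ) < q := by linarith
  constructor <;> nlinarith [mul_le_mul_of_nonneg_right hj2 (sq_nonneg q),
    mul_le_mul_of_nonneg_right hi2 hq0.le, pow_pos hq0 3, pow_pos hq0 2]

lemma tri_key {q i₁ i₃ j₂ j₃ k₁ k₂ : ℤ} (hq : 2 ≤ q)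
    (hi₁a : 1 ≤ i₁) (hi₁b : 2*i₁ ≤ q) (hi₃a : 1 ≤ i₃) (hi₃b : 2*i₃ ≤ q)
    (hj₂a : 1 ≤ j₂) (hj₂b : 2*j₂ ≤ q) (hj₃a : 1 ≤ j₃) (hj₃b : 2*j₃ ≤ q)
    (hk₁a : 1 ≤ k₁) (hk₁b : 2*k₁ ≤ q) (hk₂a : 1 ≤ k₂) (hk₂b : 2*k₂ ≤ q)
    (h : i₁*q - k₁ + (j₂*q^2 + k₂) - j₃*q^2 - i₃*q = 0) :
    i₁ = i₃ ∧ j₂ = j₃ ∧ k₁ = k₂ := by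
  have hq0 : (0:ℤ) < q := by linarith
  have hk : k₂ - k₁ = q * ((j₃ - j₂)*q + (i₃ - i₁)) := by linear_combination h
  have hk0 : k₂ - k₁ = 0 := Int.eq_zero_of_abs_lt_dvd ⟨_, hk⟩ (abs_lt.mpr ⟨by linarith, by linarith⟩)
  have h2 : (j₂ - j₃)*q + (i₁ - i₃) = 0 := by
    have : q * ((j₂ - j₃)*q + (i₁ - i₃)) = 0 := by linear_combination h - hk0
    exact (mul_eq_zero.mp this).resolve_left (by linarith)
  have hi : i₁ - i₃ = q * (j₃ - j₂) := by linear_combination h2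
  have hi0 : i₁ - i₃ = 0 := Int.eq_zero_of_abs_lt_dvd ⟨_, hi⟩ (abs_lt.mpr ⟨by linarith, by linarith⟩)
  have hj0 : j₂ - j₃ = 0 := by
    have : q * (j₂ - j₃) = 0 := by linear_combination h2 - hi0
    exact (mul_eq_zero.mp this).resolve_left (by linarith)
  exact ⟨by linarith, by linarith, by linarith⟩

lemma edgeLabel_congr {p r s : ℕ} {q : ℤ} {x y a b : Fin p ⊕ Fin r ⊕ Fin s}
    (h : s(x, y) = s(a, b)) : edgeLabel p r s q x y = edgeLabel p r s q a b := by
  have hsymm : ∀ u v : Fin p ⊕ Fin r ⊕ Fin s, edgeLabel p r s q u v = edgeLabel p r s q v u := by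
    rintro (u|u|u) (v|v|v) <;> rfl
  rw [Sym2.eq_iff] at h
  rcases h with ⟨rfl, rfl⟩ | ⟨rfl, rfl⟩
  · rfl
  · exact hsymm _ _

lemma tri_adj_norm {p r s : ℕ} {q : ℤ} (hpq : 2*(p:ℤ) ≤ q) (hrq : 2*(r:ℤ) ≤ q) (hsq : 2*(s:ℤ) ≤ q)
    {G : SimpleGraph (Fin p ⊕ Fin r ⊕ Fin s)}
    (hUU : ∀ i j : Fin p, ¬ G.Adj (Sum.inl i) (Sum.inl j))
    (hVV : ∀ i j : Fin r, ¬ G.Adj (Sum.inr (Sum.inl i)) (Sum.inr (Sum.inl j)))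
    (hWW : ∀ i j : Fin s, ¬ G.Adj (Sum.inr (Sum.inr i)) (Sum.inr (Sum.inr j)))
    {x y : Fin p ⊕ Fin r ⊕ Fin s} (h : G.Adj x y) :
    (∃ (a : Fin p) (b : Fin s), s(x, y) = s(Sum.inl a, Sum.inr (Sum.inr b)) ∧
      edgeLabel p r s q x y = 2*q^6 + (((a:ℕ)+1:ℤ)*q - ((b:ℕ)+1:ℤ)) ∧
      1 ≤ ((a:ℕ)+1:ℤ) ∧ 2*((a:ℕ)+1:ℤ) ≤ q ∧ 1 ≤ ((b:ℕ)+1:ℤ) ∧ 2*((b:ℕ)+1:ℤ) ≤ q) ∨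
    (∃ (a : Fin r) (b : Fin s), s(x, y) = s(Sum.inr (Sum.inl a), Sum.inr (Sum.inr b)) ∧
      edgeLabel p r s q x y = 7*q^6 + (((a:ℕ)+1:ℤ)*q^2 + ((b:ℕ)+1:ℤ)) ∧
      1 ≤ ((a:ℕ)+1:ℤ) ∧ 2*((a:ℕ)+1:ℤ) ≤ q ∧ 1 ≤ ((b:ℕ)+1:ℤ) ∧ 2*((b:ℕ)+1:ℤ) ≤ q) ∨
    (∃ (a : Fin p) (b : Fin r), s(x, y) = s(Sum.inl a, Sum.inr (Sum.inl b)) ∧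
      edgeLabel p r s q x y = 10*q^6 - (((b:ℕ)+1:ℤ)*q^2 + ((a:ℕ)+1:ℤ)*q) ∧
      1 ≤ ((a:ℕ)+1:ℤ) ∧ 2*((a:ℕ)+1:ℤ) ≤ q ∧ 1 ≤ ((b:ℕ)+1:ℤ) ∧ 2*((b:ℕ)+1:ℤ) ≤ q) := by
  rcases x with a|b|c <;> rcases y with a'|b'|c'
  · exact absurd h (hUU _ _)
  · have t1 := a.isLt; have t2 := b'.isLt
    exact Or.inr (Or.inr ⟨a, b', rfl, by simp [edgeLabel]; ring, by omega, by omega, by omega, by omega⟩)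
  · have t1 := a.isLt; have t2 := c'.isLt
    exact Or.inl ⟨a, c', rfl, by simp [edgeLabel]; ring, by omega, by omega, by omega, by omega⟩
  · have t1 := a'.isLt; have t2 := b.isLt
    exact Or.inr (Or.inr ⟨a', b, Sym2.eq_swap, by simp [edgeLabel]; ring, by omega, by omega, by omega, by omega⟩)
  · exact absurd h (hVV _ _)
  · have t1 := b.isLt; have t2 := c'.isLt
    exact Or.inr (Or.inl ⟨b, c', rfl, by simp [edgeLabel]; ring, by omega, by omega, by omega, by omega⟩)
  · have t1 := a'.isLt; have t2 := c.isLt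
    exact Or.inl ⟨a', c, Sym2.eq_swap, by simp [edgeLabel]; ring, by omega, by omega, by omega, by omega⟩
  · have t1 := b'.isLt; have t2 := c.isLt
    exact Or.inr (Or.inl ⟨b', c, Sym2.eq_swap, by simp [edgeLabel]; ring, by omega, by omega, by omega, by omega⟩)
  · exact absurd h (hWW _ _)

set_option maxHeartbeats 1000000 in
/-- Let `p, r, s ≥ 1` be integers and let `q = 2·max(p, r, s)`. Let `G`
be a simple graph whose vertex set is the disjoint union `U ⊔ V ⊔ W` with
`U = {u_1, …, u_p}`, `V = {v_1, …, v_r}`, `W = {w_1, …, w_s}`, and all of whose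
edges join vertices in two different parts. Label each edge `{u_i, w_k}` by
`2q⁶ + iq − k`, each edge `{v_j, w_k}` by `7q⁶ + jq² + k`, and each edge
`{u_i, v_j}` by `10q⁶ − jq² − iq`. Then for any three distinct edges
`e₁, e₂, e₃` of `G`, the labels of `e₁, e₂, e₃` sum to `19q⁶` if and only if
`{e₁, e₂, e₃}` is the edge set of a triangle of `G` (i.e., there exist `i, j, k`
with `e₁ = {u_i, w_k}`, `e₂ = {v_j, w_k}`, `e₃ = {u_i, v_j}`, up to permutation). -/
theorem tripartite_triangle_iff_label_sum (p r s : ℕ)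
    (hp : 1 ≤ p) (hr : 1 ≤ r) (hs : 1 ≤ s)
    (q : ℤ) (hq : q = 2 * (max p (max r s) : ℕ))
    (G : SimpleGraph (Fin p ⊕ Fin r ⊕ Fin s))
    (hUU : ∀ i j : Fin p, ¬ G.Adj (Sum.inl i) (Sum.inl j))
    (hVV : ∀ i j : Fin r, ¬ G.Adj (Sum.inr (Sum.inl i)) (Sum.inr (Sum.inl j)))
    (hWW : ∀ i j : Fin s, ¬ G.Adj (Sum.inr (Sum.inr i)) (Sum.inr (Sum.inr j)))
    (x₁ y₁ x₂ y₂ x₃ y₃ : Fin p ⊕ Fin r ⊕ Fin s)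
    (h₁ : G.Adj x₁ y₁) (h₂ : G.Adj x₂ y₂) (h₃ : G.Adj x₃ y₃)
    (h12 : s(x₁, y₁) ≠ s(x₂, y₂)) (h13 : s(x₁, y₁) ≠ s(x₃, y₃))
    (h23 : s(x₂, y₂) ≠ s(x₃, y₃)) :
    edgeLabel p r s q x₁ y₁ + edgeLabel p r s q x₂ y₂ + edgeLabel p r s q x₃ y₃ =
      19 * q ^ 6 ↔
    ∃ (i : Fin p) (j : Fin r) (k : Fin s),
      ({s(x₁, y₁), s(x₂, y₂), s(x₃, y₃)} : Set (Sym2 (Fin p ⊕ Fin r ⊕ Fin s))) =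
      {s(Sum.inl i, Sum.inr (Sum.inr k)),
       s(Sum.inr (Sum.inl j), Sum.inr (Sum.inr k)),
       s(Sum.inl i, Sum.inr (Sum.inl j))} := by
  have hmp : (p:ℤ) ≤ ((max p (max r s) : ℕ) : ℤ) := by exact_mod_cast le_max_left p (max r s)
  have hmr : (r:ℤ) ≤ ((max p (max r s) : ℕ) : ℤ) := by
    exact_mod_cast le_trans (le_max_left r s) (le_max_right p (max r s))
  have hms : (s:ℤ) ≤ ((max p (max r s) : ℕ) : ℤ) := by
    exact_mod_cast le_trans (le_max_right r s) (le_max_right p (max r s))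
  have hp' : (1:ℤ) ≤ (p:ℤ) := by exact_mod_cast hp
  have hr' : (1:ℤ) ≤ (r:ℤ) := by exact_mod_cast hr
  have hs' : (1:ℤ) ≤ (s:ℤ) := by exact_mod_cast hs
  have hpq : 2*(p:ℤ) ≤ q := by rw [hq]; linarith
  have hrq : 2*(r:ℤ) ≤ q := by rw [hq]; linarith
  have hsq : 2*(s:ℤ) ≤ q := by rw [hq]; linarith
  have hq2 : (2:ℤ) ≤ q := by linarith
  have hq0 : (0:ℤ) < q := by linarith
  have hq3 : (0:ℤ) < q^3 := by positivity
  have hc8 : (8:ℤ) ≤ q^3 := by nlinarith [hq2, sq_nonneg (q-2), sq_nonneg q]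
  have hq8 : 8*q^3 ≤ q^6 := by
    calc 8*q^3 ≤ q^3*q^3 := mul_le_mul_of_nonneg_right hc8 hq3.le
    _ = q^6 := by ring
  constructor
  · intro hsum
    rcases tri_adj_norm hpq hrq hsq hUU hVV hWW h₁ with
        ⟨a₁,b₁,hs₁,hl₁,q₁₁,q₁₂,q₁₃,q₁₄⟩|⟨a₁,b₁,hs₁,hl₁,q₁₁,q₁₂,q₁₃,q₁₄⟩|⟨a₁,b₁,hs₁,hl₁,q₁₁,q₁₂,q₁₃,q₁₄⟩ <;>
      rcases tri_adj_norm hpq hrq hsq hUU hVV hWW h₂ with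
        ⟨a₂,b₂,hs₂,hl₂,q₂₁,q₂₂,q₂₃,q₂₄⟩|⟨a₂,b₂,hs₂,hl₂,q₂₁,q₂₂,q₂₃,q₂₄⟩|⟨a₂,b₂,hs₂,hl₂,q₂₁,q₂₂,q₂₃,q₂₄⟩ <;>
      rcases tri_adj_norm hpq hrq hsq hUU hVV hWW h₃ with
        ⟨a₃,b₃,hs₃,hl₃,q₃₁,q₃₂,q₃₃,q₃₄⟩|⟨a₃,b₃,hs₃,hl₃,q₃₁,q₃₂,q₃₃,q₃₄⟩|⟨a₃,b₃,hs₃,hl₃,q₃₁,q₃₂,q₃₃,q₃₄⟩ <;>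
      rw [hl₁, hl₂, hl₃] at hsum <;>
      obtain ⟨dA₁l, dA₁u⟩ := tri_dUW hq2 q₁₁ q₁₂ q₁₃ q₁₄ <;>
      obtain ⟨dB₁l, dB₁u⟩ := tri_dVW hq2 q₁₁ q₁₂ q₁₃ q₁₄ <;>
      obtain ⟨dC₁l, dC₁u⟩ := tri_dUV hq2 q₁₁ q₁₂ q₁₃ q₁₄ <;>
      obtain ⟨dA₂l, dA₂u⟩ := tri_dUW hq2 q₂₁ q₂₂ q₂₃ q₂₄ <;>
      obtain ⟨dB₂l, dB₂u⟩ := tri_dVW hq2 q₂₁ q₂₂ q₂₃ q₂₄ <;>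
      obtain ⟨dC₂l, dC₂u⟩ := tri_dUV hq2 q₂₁ q₂₂ q₂₃ q₂₄ <;>
      obtain ⟨dA₃l, dA₃u⟩ := tri_dUW hq2 q₃₁ q₃₂ q₃₃ q₃₄ <;>
      obtain ⟨dB₃l, dB₃u⟩ := tri_dVW hq2 q₃₁ q₃₂ q₃₃ q₃₄ <;>
      obtain ⟨dC₃l, dC₃u⟩ := tri_dUV hq2 q₃₁ q₃₂ q₃₃ q₃₄
    all_goals try (exfalso; linarith)
    -- case (UW, VW, UV)
    · obtain ⟨hi, hj, hk⟩ := tri_key hq2 q₁₁ q₁₂ q₃₁ q₃₂ q₂₁ q₂₂ q₃₃ q₃₄ q₁₃ q₁₄ q₂₃ q₂₄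
        (by linarith)
      have e₁ : a₃ = a₁ := Fin.ext (by omega)
      have e₂ : b₃ = a₂ := Fin.ext (by omega)
      have e₃ : b₂ = b₁ := Fin.ext (by omega)
      refine ⟨a₁, a₂, b₁, ?_⟩
      rw [hs₁, hs₂, hs₃, e₁, e₂, e₃]
      try (ext e; simp only [Set.mem_insert_iff, Set.mem_singleton_iff]; tauto)
    -- case (UW, UV, VW)
    · obtain ⟨hi, hj, hk⟩ := tri_key hq2 q₁₁ q₁₂ q₂₁ q₂₂ q₃₁ q₃₂ q₂₃ q₂₄ q₁₃ q₁₄ q₃₃ q₃₄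
        (by linarith)
      have e₁ : a₂ = a₁ := Fin.ext (by omega)
      have e₂ : b₂ = a₃ := Fin.ext (by omega)
      have e₃ : b₃ = b₁ := Fin.ext (by omega)
      refine ⟨a₁, a₃, b₁, ?_⟩
      rw [hs₁, hs₂, hs₃, e₁, e₂, e₃]
      try (ext e; simp only [Set.mem_insert_iff, Set.mem_singleton_iff]; tauto)
    -- case (VW, UW, UV)
    · obtain ⟨hi, hj, hk⟩ := tri_key hq2 q₂₁ q₂₂ q₃₁ q₃₂ q₁₁ q₁₂ q₃₃ q₃₄ q₂₃ q₂₄ q₁₃ q₁₄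
        (by linarith)
      have e₁ : a₃ = a₂ := Fin.ext (by omega)
      have e₂ : b₃ = a₁ := Fin.ext (by omega)
      have e₃ : b₁ = b₂ := Fin.ext (by omega)
      refine ⟨a₂, a₁, b₂, ?_⟩
      rw [hs₁, hs₂, hs₃, e₁, e₂, e₃]
      try (ext e; simp only [Set.mem_insert_iff, Set.mem_singleton_iff]; tauto)
    -- case (VW, UV, UW)
    · obtain ⟨hi, hj, hk⟩ := tri_key hq2 q₃₁ q₃₂ q₂₁ q₂₂ q₁₁ q₁₂ q₂₃ q₂₄ q₃₃ q₃₄ q₁₃ q₁₄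
        (by linarith)
      have e₁ : a₂ = a₃ := Fin.ext (by omega)
      have e₂ : b₂ = a₁ := Fin.ext (by omega)
      have e₃ : b₁ = b₃ := Fin.ext (by omega)
      refine ⟨a₃, a₁, b₃, ?_⟩
      rw [hs₁, hs₂, hs₃, e₁, e₂, e₃]
      try (ext e; simp only [Set.mem_insert_iff, Set.mem_singleton_iff]; tauto)
    -- case (UV, UW, VW)
    · obtain ⟨hi, hj, hk⟩ := tri_key hq2 q₂₁ q₂₂ q₁₁ q₁₂ q₃₁ q₃₂ q₁₃ q₁₄ q₂₃ q₂₄ q₃₃ q₃₄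
        (by linarith)
      have e₁ : a₁ = a₂ := Fin.ext (by omega)
      have e₂ : b₁ = a₃ := Fin.ext (by omega)
      have e₃ : b₃ = b₂ := Fin.ext (by omega)
      refine ⟨a₂, a₃, b₂, ?_⟩
      rw [hs₁, hs₂, hs₃, e₁, e₂, e₃]
      try (ext e; simp only [Set.mem_insert_iff, Set.mem_singleton_iff]; tauto)
    -- case (UV, VW, UW)
    · obtain ⟨hi, hj, hk⟩ := tri_key hq2 q₃₁ q₃₂ q₁₁ q₁₂ q₂₁ q₂₂ q₁₃ q₁₄ q₃₃ q₃₄ q₂₃ q₂₄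
        (by linarith)
      have e₁ : a₁ = a₃ := Fin.ext (by omega)
      have e₂ : b₁ = a₂ := Fin.ext (by omega)
      have e₃ : b₂ = b₃ := Fin.ext (by omega)
      refine ⟨a₃, a₂, b₃, ?_⟩
      rw [hs₁, hs₂, hs₃, e₁, e₂, e₃]
      try (ext e; simp only [Set.mem_insert_iff, Set.mem_singleton_iff]; tauto)
  · rintro ⟨i, j, k, hset⟩
    have m1 : s(x₁, y₁) = s(Sum.inl i, Sum.inr (Sum.inr k)) ∨
        s(x₁, y₁) = s(Sum.inr (Sum.inl j), Sum.inr (Sum.inr k)) ∨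
        s(x₁, y₁) = s(Sum.inl i, Sum.inr (Sum.inl j)) := by
      have h : s(x₁, y₁) ∈ ({s(x₁, y₁), s(x₂, y₂), s(x₃, y₃)} :
          Set (Sym2 (Fin p ⊕ Fin r ⊕ Fin s))) := by simp
      rw [hset] at h; simpa using h
    have m2 : s(x₂, y₂) = s(Sum.inl i, Sum.inr (Sum.inr k)) ∨
        s(x₂, y₂) = s(Sum.inr (Sum.inl j), Sum.inr (Sum.inr k)) ∨
        s(x₂, y₂) = s(Sum.inl i, Sum.inr (Sum.inl j)) := by
      have h : s(x₂, y₂) ∈ ({s(x₁, y₁), s(x₂, y₂), s(x₃, y₃)} :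
          Set (Sym2 (Fin p ⊕ Fin r ⊕ Fin s))) := by simp
      rw [hset] at h; simpa using h
    have m3 : s(x₃, y₃) = s(Sum.inl i, Sum.inr (Sum.inr k)) ∨
        s(x₃, y₃) = s(Sum.inr (Sum.inl j), Sum.inr (Sum.inr k)) ∨
        s(x₃, y₃) = s(Sum.inl i, Sum.inr (Sum.inl j)) := by
      have h : s(x₃, y₃) ∈ ({s(x₁, y₁), s(x₂, y₂), s(x₃, y₃)} :
          Set (Sym2 (Fin p ⊕ Fin r ⊕ Fin s))) := by simp
      rw [hset] at h; simpa using h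
    rcases m1 with e1|e1|e1 <;> rcases m2 with e2|e2|e2 <;> rcases m3 with e3|e3|e3
    all_goals try exact absurd (e1.trans e2.symm) h12
    all_goals try exact absurd (e1.trans e3.symm) h13
    all_goals try exact absurd (e2.trans e3.symm) h23
    all_goals rw [edgeLabel_congr e1, edgeLabel_congr e2, edgeLabel_congr e3]
    all_goals simp only [edgeLabel]
    all_goals ring
end

section
/- Let m ≥ 3 be an integer and let G_m be the simple graph on vertex set (ℤ/mℤ)² in which distinct vertices v and w are adjacent if and only if w − v ∈ {±(1,0), ±(0,1), ±(1,1)}. For each vertex v, let T⁺(v) = {v, v+(1,0), v+(1,1)} and T⁻(v) = {v, v+(0,1), v+(1,1)}. Then each T⁺(v) and each T⁻(v) is a triangle of G_m (three distinct, pairwise adjacent vertices), the edge sets of the triangles T⁺(v) over all v ∈ (ℤ/mℤ)² are pairwise disjoint and their union is the entire edge set of G_m, the same holds for the triangles T⁻(v), and the family {T⁺(v) : v} is different from the family {T⁻(v) : v}. -/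
/-- The triangular torus grid graph `G_m` on vertex set `(ℤ/mℤ)²`: distinct vertices
`v` and `w` are adjacent iff `w − v ∈ {±(1,0), ±(0,1), ±(1,1)}`. -/
def triGrid (m : ℕ) : SimpleGraph (ZMod m × ZMod m) :=
  SimpleGraph.fromRel
    (fun v w => w - v ∈ ({(1, 0), (0, 1), (1, 1)} : Set (ZMod m × ZMod m)))

/-- The edge set of the positively-oriented triangle `T⁺(v) = {v, v+(1,0), v+(1,1)}`. -/
def tPlusEdges (m : ℕ) (v : ZMod m × ZMod m) : Set (Sym2 (ZMod m × ZMod m)) :=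
  {s(v, v + (1, 0)), s(v + (1, 0), v + (1, 1)), s(v, v + (1, 1))}

/-- The edge set of the negatively-oriented triangle `T⁻(v) = {v, v+(0,1), v+(1,1)}`. -/
def tMinusEdges (m : ℕ) (v : ZMod m × ZMod m) : Set (Sym2 (ZMod m × ZMod m)) :=
  {s(v, v + (0, 1)), s(v + (0, 1), v + (1, 1)), s(v, v + (1, 1))}

/-! ### Auxiliary lemmas -/

lemma my_one_ne {m : ℕ} (hm : 3 ≤ m) : (1 : ZMod m) ≠ 0 := by
  haveI : NeZero m := ⟨by omega⟩
  have : ((1:ℕ) : ZMod m) ≠ 0 := by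
    rw [Ne, ZMod.natCast_eq_zero_iff]
    intro h; have := Nat.le_of_dvd one_pos h; omega
  simpa using this

lemma my_two_ne {m : ℕ} (hm : 3 ≤ m) : (2 : ZMod m) ≠ 0 := by
  haveI : NeZero m := ⟨by omega⟩
  have : ((2:ℕ) : ZMod m) ≠ 0 := by
    rw [Ne, ZMod.natCast_eq_zero_iff]
    intro h; have := Nat.le_of_dvd two_pos h; omega
  simpa using this

lemma edge_eq {m : ℕ} (hm : 3 ≤ m) {a b d e : ZMod m × ZMod m}
    (hd : d ∈ ({(1,0),(0,1),(1,1)} : Set (ZMod m × ZMod m)))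
    (he : e ∈ ({(1,0),(0,1),(1,1)} : Set (ZMod m × ZMod m)))
    (h : s(a, a+d) = s(b, b+e)) : a = b ∧ d = e := by
  have h1 := my_one_ne hm; have h2 := my_two_ne hm
  rw [Sym2.eq_iff] at h
  rcases h with ⟨rfl, h⟩ | ⟨hab, hba⟩
  · exact ⟨rfl, by exact add_left_cancel h⟩
  · exfalso
    have hde : d + e = 0 := by
      have : (b + e) + d = b := by rw [← hab]; exact hba
      have : b + (e + d) = b + 0 := by rw [add_zero, ← add_assoc]; exact this
      have := add_left_cancel this
      rw [add_comm] at this; exact this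
    simp only [Set.mem_insert_iff, Set.mem_singleton_iff] at hd he
    rcases hd with rfl|rfl|rfl <;> rcases he with rfl|rfl|rfl <;>
      simp only [Prod.mk_add_mk, Prod.mk_eq_zero, Prod.ext_iff] at hde <;>
      simp_all [one_add_one_eq_two]

lemma dmem1 {m : ℕ} : ((1,0) : ZMod m × ZMod m) ∈ ({(1,0),(0,1),(1,1)} : Set (ZMod m × ZMod m)) := by simp
lemma dmem2 {m : ℕ} : ((0,1) : ZMod m × ZMod m) ∈ ({(1,0),(0,1),(1,1)} : Set (ZMod m × ZMod m)) := by simp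
lemma dmem3 {m : ℕ} : ((1,1) : ZMod m × ZMod m) ∈ ({(1,0),(0,1),(1,1)} : Set (ZMod m × ZMod m)) := by simp

lemma dne12 {m : ℕ} (hm : 3 ≤ m) : ((1,0) : ZMod m × ZMod m) ≠ (0,1) := by
  simp only [Ne, Prod.ext_iff, not_and]; intro h; exact absurd h (my_one_ne hm)
lemma dne13 {m : ℕ} (hm : 3 ≤ m) : ((1,0) : ZMod m × ZMod m) ≠ (1,1) := by
  simp only [Ne, Prod.ext_iff, not_and]; intro _ h; exact absurd h.symm (my_one_ne hm)
lemma dne23 {m : ℕ} (hm : 3 ≤ m) : ((0,1) : ZMod m × ZMod m) ≠ (1,1) := by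
  simp only [Ne, Prod.ext_iff, not_and]; intro h; exact absurd h.symm (my_one_ne hm)

lemma dne0 {m : ℕ} (hm : 3 ≤ m) {d : ZMod m × ZMod m}
    (hd : d ∈ ({(1,0),(0,1),(1,1)} : Set (ZMod m × ZMod m))) : d ≠ 0 := by
  have h1 := my_one_ne hm
  rcases hd with rfl|rfl|rfl <;>
    · simp only [Ne, Prod.ext_iff, Prod.fst_zero, Prod.snd_zero, not_and]
      first
      | exact fun h => absurd h h1
      | exact fun _ h => absurd h h1

lemma sum11 {m : ℕ} : ((1,0) : ZMod m × ZMod m) + (0,1) = (1,1) := by simp [Prod.ext_iff]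

lemma sum11' {m : ℕ} : ((0,1) : ZMod m × ZMod m) + (1,0) = (1,1) := by
  rw [add_comm]; exact sum11

lemma tPlus_eq {m : ℕ} (v : ZMod m × ZMod m) :
    tPlusEdges m v = {s(v, v + (1,0)), s(v + (1,0), (v + (1,0)) + (0,1)), s(v, v + (1,1))} := by
  rw [tPlusEdges, add_assoc, sum11]

lemma tMinus_eq {m : ℕ} (v : ZMod m × ZMod m) :
    tMinusEdges m v = {s(v, v + (0,1)), s(v + (0,1), (v + (0,1)) + (1,0)), s(v, v + (1,1))} := by
  rw [tMinusEdges, add_assoc, sum11']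

lemma adj_of {m : ℕ} (hm : 3 ≤ m) (a d : ZMod m × ZMod m)
    (hd : d ∈ ({(1,0),(0,1),(1,1)} : Set (ZMod m × ZMod m))) :
    (triGrid m).Adj a (a + d) := by
  rw [triGrid, SimpleGraph.fromRel_adj]
  refine ⟨fun h => dne0 hm hd (by rwa [left_eq_add] at h), Or.inl (by simpa using hd)⟩

lemma plus_disj {m : ℕ} (hm : 3 ≤ m) (v w : ZMod m × ZMod m) (hvw : v ≠ w) :
    Disjoint (tPlusEdges m v) (tPlusEdges m w) := by
  rw [Set.disjoint_left]
  intro x hx hy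
  rw [tPlus_eq] at hx hy
  simp only [Set.mem_insert_iff, Set.mem_singleton_iff] at hx hy
  rcases hx with rfl|rfl|rfl
  · rcases hy with h|h|h
    · exact hvw (edge_eq hm dmem1 dmem1 h).1
    · exact absurd (edge_eq hm dmem1 dmem2 h).2 (dne12 hm)
    · exact absurd (edge_eq hm dmem1 dmem3 h).2 (dne13 hm)
  · rcases hy with h|h|h
    · exact (dne12 hm) ((edge_eq hm dmem2 dmem1 h).2.symm)
    · exact hvw (add_right_cancel (edge_eq hm dmem2 dmem2 h).1)
    · exact absurd (edge_eq hm dmem2 dmem3 h).2 (dne23 hm)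
  · rcases hy with h|h|h
    · exact (dne13 hm) ((edge_eq hm dmem3 dmem1 h).2.symm)
    · exact (dne23 hm) ((edge_eq hm dmem3 dmem2 h).2.symm)
    · exact hvw (edge_eq hm dmem3 dmem3 h).1

lemma minus_disj {m : ℕ} (hm : 3 ≤ m) (v w : ZMod m × ZMod m) (hvw : v ≠ w) :
    Disjoint (tMinusEdges m v) (tMinusEdges m w) := by
  rw [Set.disjoint_left]
  intro x hx hy
  rw [tMinus_eq] at hx hy
  simp only [Set.mem_insert_iff, Set.mem_singleton_iff] at hx hy
  rcases hx with rfl|rfl|rfl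
  · rcases hy with h|h|h
    · exact hvw (edge_eq hm dmem2 dmem2 h).1
    · exact (dne12 hm) ((edge_eq hm dmem2 dmem1 h).2.symm)
    · exact absurd (edge_eq hm dmem2 dmem3 h).2 (dne23 hm)
  · rcases hy with h|h|h
    · exact absurd (edge_eq hm dmem1 dmem2 h).2 (dne12 hm)
    · exact hvw (add_right_cancel (edge_eq hm dmem1 dmem1 h).1)
    · exact absurd (edge_eq hm dmem1 dmem3 h).2 (dne13 hm)
  · rcases hy with h|h|h
    · exact (dne23 hm) ((edge_eq hm dmem3 dmem2 h).2.symm)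
    · exact (dne13 hm) ((edge_eq hm dmem3 dmem1 h).2.symm)
    · exact hvw (edge_eq hm dmem3 dmem3 h).1

lemma plus_cover {m : ℕ} (a b : ZMod m × ZMod m)
    (h : b - a ∈ ({(1,0),(0,1),(1,1)} : Set (ZMod m × ZMod m))) :
    s(a, b) ∈ ⋃ v : ZMod m × ZMod m, tPlusEdges m v := by
  rw [Set.mem_iUnion]
  have hb : b = a + (b - a) := by ring
  rcases h with h|h|h
  · exact ⟨a, by rw [tPlus_eq]; left; rw [hb, h]⟩
  · refine ⟨a - (1,0), ?_⟩
    rw [tPlus_eq]; right; left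
    rw [sub_add_cancel, hb, h]
  · exact ⟨a, by rw [tPlus_eq]; right; right; rw [hb, h]; rfl⟩

lemma minus_cover {m : ℕ} (a b : ZMod m × ZMod m)
    (h : b - a ∈ ({(1,0),(0,1),(1,1)} : Set (ZMod m × ZMod m))) :
    s(a, b) ∈ ⋃ v : ZMod m × ZMod m, tMinusEdges m v := by
  rw [Set.mem_iUnion]
  have hb : b = a + (b - a) := by ring
  rcases h with h|h|h
  · refine ⟨a - (0,1), ?_⟩
    rw [tMinus_eq]; right; left
    rw [sub_add_cancel, hb, h]
  · exact ⟨a, by rw [tMinus_eq]; left; rw [hb, h]⟩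
  · exact ⟨a, by rw [tMinus_eq]; right; right; rw [hb, h]; rfl⟩

lemma plus_union {m : ℕ} (hm : 3 ≤ m) :
    (⋃ v : ZMod m × ZMod m, tPlusEdges m v) = (triGrid m).edgeSet := by
  ext x
  induction x using Sym2.ind with
  | _ a b =>
    simp only [SimpleGraph.mem_edgeSet]
    constructor
    · rw [Set.mem_iUnion]
      rintro ⟨v, hv⟩
      rw [tPlus_eq] at hv
      simp only [Set.mem_insert_iff, Set.mem_singleton_iff] at hv
      rcases hv with h|h|h <;>
        rcases Sym2.eq_iff.1 h with ⟨rfl, rfl⟩|⟨rfl, rfl⟩ <;>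
        first
        | exact adj_of hm _ _ dmem1
        | exact adj_of hm _ _ dmem2
        | exact adj_of hm _ _ dmem3
        | exact (adj_of hm _ _ dmem1).symm
        | exact (adj_of hm _ _ dmem2).symm
        | exact (adj_of hm _ _ dmem3).symm
    · intro h
      rw [triGrid, SimpleGraph.fromRel_adj] at h
      rcases h.2 with h2|h2
      · exact plus_cover a b h2
      · rw [Sym2.eq_swap]; exact plus_cover b a h2

lemma minus_union {m : ℕ} (hm : 3 ≤ m) :
    (⋃ v : ZMod m × ZMod m, tMinusEdges m v) = (triGrid m).edgeSet := by
  ext x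
  induction x using Sym2.ind with
  | _ a b =>
    simp only [SimpleGraph.mem_edgeSet]
    constructor
    · rw [Set.mem_iUnion]
      rintro ⟨v, hv⟩
      rw [tMinus_eq] at hv
      simp only [Set.mem_insert_iff, Set.mem_singleton_iff] at hv
      rcases hv with h|h|h <;>
        rcases Sym2.eq_iff.1 h with ⟨rfl, rfl⟩|⟨rfl, rfl⟩ <;>
        first
        | exact adj_of hm _ _ dmem1
        | exact adj_of hm _ _ dmem2
        | exact adj_of hm _ _ dmem3
        | exact (adj_of hm _ _ dmem1).symm
        | exact (adj_of hm _ _ dmem2).symm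
        | exact (adj_of hm _ _ dmem3).symm
    · intro h
      rw [triGrid, SimpleGraph.fromRel_adj] at h
      rcases h.2 with h2|h2
      · exact minus_cover a b h2
      · rw [Sym2.eq_swap]; exact minus_cover b a h2

lemma range_ne {m : ℕ} (hm : 3 ≤ m) :
    (Set.range fun v : ZMod m × ZMod m =>
        ({v, v + (1, 0), v + (1, 1)} : Set (ZMod m × ZMod m))) ≠
      (Set.range fun v : ZMod m × ZMod m =>
        ({v, v + (0, 1), v + (1, 1)} : Set (ZMod m × ZMod m))) := by
  have h1 := my_one_ne hm; have h2 := my_two_ne hm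
  intro h
  have h0 : ({(0 : ZMod m × ZMod m), (1,0), (1,1)} : Set (ZMod m × ZMod m)) ∈
      Set.range (fun v : ZMod m × ZMod m => ({v, v + (0,1), v + (1,1)} : Set (ZMod m × ZMod m))) := by
    rw [← h]
    exact ⟨0, by simp⟩
  obtain ⟨w, hw⟩ := h0
  simp only at hw
  have hwmem : w ∈ ({0, (1,0), (1,1)} : Set (ZMod m × ZMod m)) := by
    rw [← hw]; exact Set.mem_insert _ _
  rcases hwmem with rfl|rfl|rfl
  · have : ((1,0) : ZMod m × ZMod m) ∈ ({0, (0:ZMod m×ZMod m) + (0,1), (0:ZMod m×ZMod m) + (1,1)} : Set (ZMod m × ZMod m)) := by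
      rw [hw]; simp
    simp only [zero_add, Set.mem_insert_iff, Set.mem_singleton_iff, Prod.ext_iff] at this
    rcases this with ⟨ha, _⟩ | ⟨ha, _⟩ | ⟨_, hb⟩
    · exact h1 ha
    · exact h1 ha
    · exact h1 hb.symm
  · have : ((0,0) : ZMod m × ZMod m) ∈ ({((1,0):ZMod m×ZMod m), ((1,0):ZMod m×ZMod m) + (0,1), ((1,0):ZMod m×ZMod m) + (1,1)} : Set (ZMod m × ZMod m)) := by
      rw [hw]; exact Set.mem_insert _ _
    simp only [Prod.mk_add_mk, add_zero, zero_add, one_add_one_eq_two, Set.mem_insert_iff, Set.mem_singleton_iff, Prod.ext_iff] at this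
    rcases this with ⟨ha, _⟩ | ⟨ha, _⟩ | ⟨ha, _⟩
    · exact h1 ha.symm
    · exact h1 ha.symm
    · exact h2 ha.symm
  · have : ((0,0) : ZMod m × ZMod m) ∈ ({((1,1):ZMod m×ZMod m), ((1,1):ZMod m×ZMod m) + (0,1), ((1,1):ZMod m×ZMod m) + (1,1)} : Set (ZMod m × ZMod m)) := by
      rw [hw]; exact Set.mem_insert _ _
    simp only [Prod.mk_add_mk, add_zero, zero_add, one_add_one_eq_two, Set.mem_insert_iff, Set.mem_singleton_iff, Prod.ext_iff] at this
    rcases this with ⟨ha, _⟩ | ⟨ha, _⟩ | ⟨ha, _⟩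
    · exact h1 ha.symm
    · exact h1 ha.symm
    · exact h2 ha.symm

/-- For `m ≥ 3`, in the triangular torus grid graph `G_m`, each
`T⁺(v) = {v, v+(1,0), v+(1,1)}` and each `T⁻(v) = {v, v+(0,1), v+(1,1)}` is a
triangle (three distinct, pairwise adjacent vertices); the edge sets of the
triangles `T⁺(v)` over all `v` are pairwise disjoint with union the entire edge
set of `G_m`; the same holds for the triangles `T⁻(v)`; and the family
`{T⁺(v) : v}` is different from the family `{T⁻(v) : v}`. -/
theorem triGrid_two_triangle_partitions (m : ℕ) (hm : 3 ≤ m) :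
    (∀ v : ZMod m × ZMod m,
      v ≠ v + (1, 0) ∧ v ≠ v + (1, 1) ∧ v + (1, 0) ≠ v + (1, 1) ∧
      (triGrid m).Adj v (v + (1, 0)) ∧ (triGrid m).Adj (v + (1, 0)) (v + (1, 1)) ∧
      (triGrid m).Adj v (v + (1, 1))) ∧
    (∀ v : ZMod m × ZMod m,
      v ≠ v + (0, 1) ∧ v ≠ v + (1, 1) ∧ v + (0, 1) ≠ v + (1, 1) ∧
      (triGrid m).Adj v (v + (0, 1)) ∧ (triGrid m).Adj (v + (0, 1)) (v + (1, 1)) ∧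
      (triGrid m).Adj v (v + (1, 1))) ∧
    (∀ v w : ZMod m × ZMod m, v ≠ w → Disjoint (tPlusEdges m v) (tPlusEdges m w)) ∧
    (⋃ v : ZMod m × ZMod m, tPlusEdges m v) = (triGrid m).edgeSet ∧
    (∀ v w : ZMod m × ZMod m, v ≠ w → Disjoint (tMinusEdges m v) (tMinusEdges m w)) ∧
    (⋃ v : ZMod m × ZMod m, tMinusEdges m v) = (triGrid m).edgeSet ∧
    (Set.range fun v : ZMod m × ZMod m =>
        ({v, v + (1, 0), v + (1, 1)} : Set (ZMod m × ZMod m))) ≠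
      (Set.range fun v : ZMod m × ZMod m =>
        ({v, v + (0, 1), v + (1, 1)} : Set (ZMod m × ZMod m))) := by
  refine ⟨fun v => ?_, fun v => ?_, plus_disj hm, plus_union hm, minus_disj hm,
    minus_union hm, range_ne hm⟩
  · refine ⟨fun h => dne0 hm dmem1 (by rwa [left_eq_add] at h),
      fun h => dne0 hm dmem3 (by rwa [left_eq_add] at h),
      fun h => dne13 hm (add_left_cancel h),
      adj_of hm v _ dmem1, ?_, adj_of hm v _ dmem3⟩
    rw [show v + (1,1) = (v + (1,0)) + (0,1) from by rw [add_assoc, sum11]]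
    exact adj_of hm _ _ dmem2
  · refine ⟨fun h => dne0 hm dmem2 (by rwa [left_eq_add] at h),
      fun h => dne0 hm dmem3 (by rwa [left_eq_add] at h),
      fun h => dne23 hm (add_left_cancel h),
      adj_of hm v _ dmem2, ?_, adj_of hm v _ dmem3⟩
    rw [show v + (1,1) = (v + (0,1)) + (1,0) from by rw [add_assoc, sum11']]
    exact adj_of hm _ _ dmem1
end
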